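/- For every k ≥ 1, if H_0,…,H_{k-1} are nowhere zero then the operator identity (D − b_k·)∘L_{k-1} = L_k∘(D − T^{-1}(b_{k-1})·) holds on 𝔉. -/

import Mathlib

/-!
Semi-discrete setting: the space `𝔉` is modelled by `SDF = ℤ → ℝ → ℝ`
(functions `φ(i,x)`, smooth in `x` for each `i`), with the shift `T`,
the inverse shift `Tinv`, the `k`-fold shift `Tz k`, and the derivative `D`.
For `g : SDF`, pointwise multiplication `g * φ` models the operator `g·`.
-/

/-- The underlying function space of `𝔉`. -/
abbrev SDF : Type := ℤ → ℝ → ℝ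

namespace SDF

noncomputable section

/-- The shift operator `T(φ)(i,x) = φ(i+1,x)`. -/
def T (φ : SDF) : SDF := fun i x => φ (i + 1) x

/-- The inverse shift operator `T⁻¹(φ)(i,x) = φ(i-1,x)`. -/
def Tinv (φ : SDF) : SDF := fun i x => φ (i - 1) x

/-- The `k`-fold shift. -/
def Tz (k : ℤ) (φ : SDF) : SDF := fun i x => φ (i + k) x

/-- The total derivative `D(φ)(i,x) = ∂φ/∂x (i,x)`. -/
def D (φ : SDF) : SDF := fun i x => deriv (φ i) x

/-- Membership in `𝔉`: infinitely differentiable in `x` for every `i`. -/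
def Smooth (φ : SDF) : Prop := ∀ i : ℤ, ContDiff ℝ (⊤ : ℕ∞) (φ i)

/-- A function that is nowhere zero. -/
def NowhereZero (φ : SDF) : Prop := ∀ i x, φ i x ≠ 0

/-- The linearization operator `L = T∘D − a·D − b·T − c·`. -/
def L (a b c : SDF) (φ : SDF) : SDF := T (D φ) - a * D φ - b * T φ - c * φ

/-- The pair `(a_k, G_k)` of the Laplace i-transformations:
`a_0 = a`, `G_0 = c + a·b − D(a)`,
`a_k = a_{k-1}·T(G_{k-1})/G_{k-1}`,
`G_k = T(G_{k-1}) − D(a_k) + a_k·(T^k(b) − T^{k-1}(b))`. -/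
def aG (a b c : SDF) : ℕ → SDF × SDF
  | 0 => (a, c + a * b - D a)
  | k + 1 =>
      let ak := (aG a b c k).1 * T (aG a b c k).2 / (aG a b c k).2
      (ak, T (aG a b c k).2 - D ak + ak * (Tz ((k : ℤ) + 1) b - Tz (k : ℤ) b))

/-- The function `a_k`. -/
def ai (a b c : SDF) (k : ℕ) : SDF := (aG a b c k).1

/-- The Laplace i-invariant `G_k`. -/
def Gi (a b c : SDF) (k : ℕ) : SDF := (aG a b c k).2

/-- The pair `(b_k, H_k)` of the Laplace x-transformations:
`b_0 = b`, `H_0 = c + a·T⁻¹(b)`,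
`b_k = T⁻¹(b_{k-1}) + D(H_{k-1})/H_{k-1}`,
`H_k = H_{k-1} + a·(T⁻¹(b_k) − b_k) + D(a)`. -/
def bH (a b c : SDF) : ℕ → SDF × SDF
  | 0 => (b, c + a * Tinv b)
  | k + 1 =>
      let bk := Tinv (bH a b c k).1 + D (bH a b c k).2 / (bH a b c k).2
      (bk, (bH a b c k).2 + a * (Tinv bk - bk) + D a)

/-- The function `b_k`. -/
def bx (a b c : SDF) (k : ℕ) : SDF := (bH a b c k).1

/-- The Laplace x-invariant `H_k`. -/
def Hx (a b c : SDF) (k : ℕ) : SDF := (bH a b c k).2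

/-- The operator `L_{-k}`: `L_0 = L` and
`L_{-k} = (D − T^k(b)·)∘(T − a_k·) − G_k·` for `k ≥ 1`. -/
def Lneg (a b c : SDF) : ℕ → SDF → SDF
  | 0, φ => L a b c φ
  | k + 1, φ =>
      D (T φ - ai a b c (k + 1) * φ)
        - Tz ((k : ℤ) + 1) b * (T φ - ai a b c (k + 1) * φ)
        - Gi a b c (k + 1) * φ

/-- The operator `L_k`, `k ≥ 1`: `L_0 = L` and
`L_k = (T − a·)∘(D − T⁻¹(b_k)·) − H_k·` for `k ≥ 1`. -/
def Lpos (a b c : SDF) : ℕ → SDF → SDF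
  | 0, φ => L a b c φ
  | k + 1, φ =>
      T (D φ - Tinv (bx a b c (k + 1)) * φ)
        - a * (D φ - Tinv (bx a b c (k + 1)) * φ)
        - Hx a b c (k + 1) * φ

/-- `Cc (k+1)` is the operator `C_k = (D − T⁻¹(b_k)·)∘C_{k-1}`; `Cc 0 = id` is `C_{-1}`. -/
def Cc (a b c : SDF) : ℕ → SDF → SDF
  | 0, φ => φ
  | k + 1, φ => D (Cc a b c k φ) - Tinv (bx a b c k) * Cc a b c k φ

/-- `Cbar k` is the operator `C̄_k`: `C̄_0 = id`, `C̄_k = (D − b_k·)∘C̄_{k-1}`. -/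
def Cbar (a b c : SDF) : ℕ → SDF → SDF
  | 0, φ => φ
  | k + 1, φ => D (Cbar a b c k φ) - bx a b c (k + 1) * Cbar a b c k φ

/-- `Aa (k+1)` is the operator `A_k = (T − a_k·)∘A_{k-1}`; `Aa 0 = id` is `A_{-1}`. -/
def Aa (a b c : SDF) : ℕ → SDF → SDF
  | 0, φ => φ
  | k + 1, φ => T (Aa a b c k φ) - ai a b c k * Aa a b c k φ

/-- `Abar k` is the operator `Ā_k`: `Ā_0 = id`, `Ā_k = (T − a_k·)∘Ā_{k-1}`. -/
def Abar (a b c : SDF) : ℕ → SDF → SDF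
  | 0, φ => φ
  | k + 1, φ => T (Abar a b c k φ) - ai a b c (k + 1) * Abar a b c k φ

end
section AuxLemmas

lemma contDiff_deriv' {f : ℝ → ℝ} (h : ContDiff ℝ (⊤ : ℕ∞) f) : ContDiff ℝ (⊤ : ℕ∞) (deriv f) :=
  (contDiff_infty_iff_deriv.mp h).2

variable {f g : SDF}

lemma smooth_T (h : Smooth f) : Smooth (T f) := fun i => h (i + 1)
lemma smooth_Tinv (h : Smooth f) : Smooth (Tinv f) := fun i => h (i - 1)
lemma smooth_D (h : Smooth f) : Smooth (D f) := fun i => contDiff_deriv' (h i)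
lemma smooth_add (hf : Smooth f) (hg : Smooth g) : Smooth (f + g) := fun i => (hf i).add (hg i)
lemma smooth_sub (hf : Smooth f) (hg : Smooth g) : Smooth (f - g) := fun i => (hf i).sub (hg i)
lemma smooth_mul (hf : Smooth f) (hg : Smooth g) : Smooth (f * g) := fun i => (hf i).mul (hg i)
lemma smooth_div (hf : Smooth f) (hg : Smooth g) (h0 : NowhereZero g) : Smooth (f / g) :=
  fun i => (hf i).div (hg i) (h0 i)

lemma D_T (f : SDF) : D (T f) = T (D f) := rfl
lemma T_sub (f g : SDF) : T (f - g) = T f - T g := rfl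
lemma T_mul (f g : SDF) : T (f * g) = T f * T g := rfl
lemma T_Tinv (f : SDF) : T (Tinv f) = f := by funext i x; simp [T, Tinv]

lemma D_sub (hf : Smooth f) (hg : Smooth g) : D (f - g) = D f - D g := by
  funext i x
  show deriv (fun y => f i y - g i y) x = deriv (f i) x - deriv (g i) x
  exact deriv_fun_sub ((hf i).differentiable (by simp)).differentiableAt
    ((hg i).differentiable (by simp)).differentiableAt

lemma D_mul (hf : Smooth f) (hg : Smooth g) : D (f * g) = D f * g + f * D g := by
  funext i x
  show deriv (fun y => f i y * g i y) x = deriv (f i) x * g i x + f i x * deriv (g i) x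
  exact deriv_fun_mul ((hf i).differentiable (by simp)).differentiableAt
    ((hg i).differentiable (by simp)).differentiableAt

lemma Lpos_factored (a b c : SDF) (k : ℕ) (φ : SDF) :
    Lpos a b c k φ =
      T (D φ - Tinv (bx a b c k) * φ) - a * (D φ - Tinv (bx a b c k) * φ)
        - Hx a b c k * φ := by
  cases k with
  | zero =>
      funext i x
      simp only [Lpos, L, T, Tinv, D, bx, Hx, bH, Pi.sub_apply, Pi.mul_apply, Pi.add_apply]
      ring
  | succ k => rfl

lemma smooth_bx_Hx (a b c : SDF) (ha : Smooth a) (hb : Smooth b) (hc : Smooth c) :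
    ∀ m : ℕ, (∀ j, j < m → NowhereZero (Hx a b c j)) →
      Smooth (bx a b c m) ∧ Smooth (Hx a b c m)
  | 0, _ => ⟨hb, smooth_add hc (smooth_mul ha (smooth_Tinv hb))⟩
  | m + 1, h => by
      obtain ⟨hbm, hHm⟩ := smooth_bx_Hx a b c ha hb hc m
        (fun j hj => h j (hj.trans (Nat.lt_succ_self m)))
      have hb1 : Smooth (bx a b c (m + 1)) := by
        show Smooth (Tinv (bx a b c m) + D (Hx a b c m) / Hx a b c m)
        exact smooth_add (smooth_Tinv hbm)
          (smooth_div (smooth_D hHm) hHm (h m (Nat.lt_succ_self m)))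
      refine ⟨hb1, ?_⟩
      show Smooth (Hx a b c m + a * (Tinv (bx a b c (m + 1)) - bx a b c (m + 1)) + D a)
      exact smooth_add
        (smooth_add hHm (smooth_mul ha (smooth_sub (smooth_Tinv hb1) hb1)))
        (smooth_D ha)

end AuxLemmas

lemma core_identity (a β b' H H' φ ψ : SDF) (ha : Smooth a) (hψ : Smooth ψ)
    (hH : Smooth H) (hφ : Smooth φ)
    (hψdef : ψ = D φ - β * φ)
    (hb' : b' * H = β * H + D H)
    (hT : T (Tinv b') = b')
    (hH' : H' = H + a * (Tinv b' - b') + D a) :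
    D (T ψ - a * ψ - H * φ) - b' * (T ψ - a * ψ - H * φ)
      = T (D ψ - Tinv b' * ψ) - a * (D ψ - Tinv b' * ψ) - H' * ψ := by
  rw [D_sub (smooth_sub (smooth_T hψ) (smooth_mul ha hψ)) (smooth_mul hH hφ),
      D_sub (smooth_T hψ) (smooth_mul ha hψ), D_mul ha hψ, D_mul hH hφ, D_T,
      T_sub, T_mul, hT, hH']
  linear_combination φ * hb' + H * hψdef

/-- For every `k ≥ 1`, if `H_0, …, H_{k-1}` are nowhere zero then the
operator identity `(D − b_k·)∘L_{k-1} = L_k∘(D − T⁻¹(b_{k-1})·)` holds on `𝔉`. -/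
theorem statement2 (a b c : SDF) (ha : Smooth a) (hb : Smooth b) (hc : Smooth c)
    (k : ℕ) (hk : 1 ≤ k) (hH : ∀ m, m < k → NowhereZero (Hx a b c m)) :
    ∀ φ : SDF, Smooth φ →
      D (Lpos a b c (k - 1) φ) - bx a b c k * Lpos a b c (k - 1) φ
        = Lpos a b c k (D φ - Tinv (bx a b c (k - 1)) * φ) := by
  obtain ⟨m, rfl⟩ : ∃ m, k = m + 1 := ⟨k - 1, (Nat.succ_pred_eq_of_pos hk).symm⟩
  simp only [Nat.add_sub_cancel]
  intro φ hφ
  obtain ⟨hbm, hHm⟩ := smooth_bx_Hx a b c ha hb hc m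
    (fun j hj => hH j (hj.trans m.lt_succ_self))
  have hne : NowhereZero (Hx a b c m) := hH m m.lt_succ_self
  have hψ : Smooth (D φ - Tinv (bx a b c m) * φ) :=
    smooth_sub (smooth_D hφ) (smooth_mul (smooth_Tinv hbm) hφ)
  have key : D (Hx a b c m) / Hx a b c m * Hx a b c m = D (Hx a b c m) := by
    funext i x
    exact div_mul_cancel₀ _ (hne i x)
  have hb' : bx a b c (m + 1) * Hx a b c m
      = Tinv (bx a b c m) * Hx a b c m + D (Hx a b c m) := by
    have h1 : bx a b c (m + 1)
        = Tinv (bx a b c m) + D (Hx a b c m) / Hx a b c m := rfl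
    rw [h1, add_mul, key]
  have hLm : Lpos a b c m φ
      = T (D φ - Tinv (bx a b c m) * φ) - a * (D φ - Tinv (bx a b c m) * φ)
        - Hx a b c m * φ := Lpos_factored a b c m φ
  have hLm1 : Lpos a b c (m + 1) (D φ - Tinv (bx a b c m) * φ)
      = T (D (D φ - Tinv (bx a b c m) * φ)
            - Tinv (bx a b c (m + 1)) * (D φ - Tinv (bx a b c m) * φ))
        - a * (D (D φ - Tinv (bx a b c m) * φ)
            - Tinv (bx a b c (m + 1)) * (D φ - Tinv (bx a b c m) * φ))
        - Hx a b c (m + 1) * (D φ - Tinv (bx a b c m) * φ) := rfl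
  rw [hLm, hLm1]
  exact core_identity a (Tinv (bx a b c m)) (bx a b c (m + 1)) (Hx a b c m)
    (Hx a b c (m + 1)) φ (D φ - Tinv (bx a b c m) * φ) ha hψ hHm hφ rfl hb'
    (T_Tinv _) rfl

end SDF
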